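/- arXiv:2010.04888 — 6 statements merged into one kernel-verified Lean document; each statement's English description precedes it below -/
import Mathlib

section
/- For every function v in H^1(0,2π) with v(φ) = -v(2π-φ) (odd about π), the inequality (1/4)∫₀^{2π} v² ≤ ∫₀^{2π} (v')² holds, with equality if and only if v(φ) = μ cos(φ/2) for some constant μ. -/
/-!
By the reflection `φ ↦ 2π - φ` it suffices to work on `[0, π]` with `v π = 0`, where
`cos (x / 2)` is the ground state of `-d²/dx²` (Neumann at `0`, Dirichlet at `π`). Completing the
square against it gives, for `a < π`,
`∫₀ᵃ (v'² - v²/4) = ∫₀ᵃ (v' + (v/2) tan (x/2))² - (v(a)²/2) tan (a/2)`,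
and the boundary term tends to `0` as `a → π` by l'Hôpital. So the deficit `∫₀^π (v'² - v²/4)` is
the limit of nondecreasing nonnegative integrals; if it vanishes, so does
`v' + (v/2) tan (x/2) = cos (x/2) (v / cos (x/2))'`, and `v / cos (x/2)` is constant.
-/

open Real Set intervalIntegral

open MeasureTheory Filter Topology

lemma cos_half_pos {x : ℝ} (hx : x ∈ Ioo (-π) π) : 0 < cos (x / 2) :=
  cos_pos_of_mem_Ioo ⟨by linarith [hx.1], by linarith [hx.2]⟩

lemma continuousOn_tan_half {a : ℝ} (haπ : a < π) :
    ContinuousOn (fun x => tan (x / 2)) (Icc 0 a) :=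
  continuousOn_tan.comp (continuous_id.div_const 2).continuousOn fun x hx =>
    (cos_half_pos ⟨by linarith [hx.1, pi_pos], by linarith [hx.2]⟩).ne'

lemma sq_sub_sq_div_four_eq (v w θ : ℝ) (hθ : cos θ ≠ 0) :
    w ^ 2 - v ^ 2 / 4 = (w + v / 2 * tan θ) ^ 2 - (v * w * tan θ + v ^ 2 / 4 / cos θ ^ 2) := by
  rw [tan_eq_sin_div_cos]
  field_simp
  linear_combination (-4 * v ^ 2) * sin_sq_add_cos_sq θ

lemma integral_zero_two_mul_eq_of_reflect {f : ℝ → ℝ} {c : ℝ} (hc : 0 ≤ c)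
    (hf : IntervalIntegrable f volume 0 (2 * c))
    (hrefl : EqOn (fun x => f (2 * c - x)) f (Ioo 0 c)) :
    ∫ x in 0..2 * c, f x = 2 * ∫ x in 0..c, f x := by
  have hsub : ∀ {a b}, a ∈ uIcc 0 (2 * c) → b ∈ uIcc 0 (2 * c) → IntervalIntegrable f volume a b :=
    fun ha hb => hf.mono_set (uIcc_subset_uIcc ha hb)
  have hmid : c ∈ uIcc 0 (2 * c) := by rw [uIcc_of_le (by linarith)]; constructor <;> linarith
  have hsecond : ∫ x in c..2 * c, f x = ∫ x in 0..c, f x := by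
    rw [← integral_congr_Ioo_of_le hc hrefl, integral_comp_sub_left]
    ring_nf
  rw [← integral_add_adjacent_intervals (hsub left_mem_uIcc hmid) (hsub hmid right_mem_uIcc),
    hsecond, two_mul]

lemma deriv_eq_deriv_reflect {f : ℝ → ℝ} {a x : ℝ} (h : f =ᶠ[𝓝 x] fun y => -f (a - y)) :
    deriv f x = deriv f (a - x) := by
  rw [h.deriv_eq, deriv.fun_neg, deriv_comp_const_sub, neg_neg]

lemma eqOn_zero_of_integral_sq_eq_zero {f : ℝ → ℝ} {a b : ℝ} (hab : a ≤ b)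
    (hf : ContinuousOn f (Icc a b)) (h : ∫ x in a..b, f x ^ 2 = 0) : EqOn f 0 (Ioc a b) := by
  have hsq : ContinuousOn (fun x => f x ^ 2) (Icc a b) := hf.pow 2
  have hae := (integral_eq_zero_iff_of_le_of_nonneg_ae hab (.of_forall fun x => sq_nonneg (f x))
    (hsq.intervalIntegrable_of_Icc hab)).1 h
  intro x hx
  simpa using Measure.eqOn_Ioc_of_ae_eq volume hae (hsq.mono Ioc_subset_Icc_self)
    continuousOn_const hx

section HalfInterval

variable {v w : ℝ → ℝ}

lemma hasDerivAt_sq_mul_tan_half {x : ℝ} (hd : HasDerivAt v (w x) x) (hx : cos (x / 2) ≠ 0) :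
    HasDerivAt (fun y => v y ^ 2 / 2 * tan (y / 2))
      (v x * w x * tan (x / 2) + v x ^ 2 / 4 / cos (x / 2) ^ 2) x := by
  have htan := (hasDerivAt_tan hx).comp x ((hasDerivAt_id' x).div_const 2)
  refine (((hd.fun_pow 2).div_const 2).fun_mul htan).congr_deriv ?_
  simp only [Function.comp_apply]
  field_simp
  ring

lemma integral_sq_sub_eq_integral_sq_sub_tan {a : ℝ} (ha : 0 ≤ a) (haπ : a < π)
    (hv : ContinuousOn v (Icc 0 a)) (hw : ContinuousOn w (Icc 0 a))
    (hd : ∀ x ∈ Ioo 0 a, HasDerivAt v (w x) x) :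
    ∫ x in 0..a, (w x ^ 2 - v x ^ 2 / 4) =
      (∫ x in 0..a, (w x + v x / 2 * tan (x / 2)) ^ 2) - v a ^ 2 / 2 * tan (a / 2) := by
  have hcos : ∀ x ∈ Icc 0 a, cos (x / 2) ≠ 0 := fun x hx =>
    (cos_half_pos ⟨by linarith [hx.1, pi_pos], by linarith [hx.2]⟩).ne'
  have htan := continuousOn_tan_half haπ
  have hderiv_cont : ContinuousOn
      (fun x => v x * w x * tan (x / 2) + v x ^ 2 / 4 / cos (x / 2) ^ 2) (Icc 0 a) :=
    (hv.mul hw).mul htan |>.add <| ((hv.pow 2).div_const 4).div (by fun_prop)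
      fun x hx => pow_ne_zero 2 (hcos x hx)
  have hsq : ContinuousOn (fun x => (w x + v x / 2 * tan (x / 2)) ^ 2) (Icc 0 a) :=
    (hw.add ((hv.div_const 2).mul htan)).pow 2
  have hftc := integral_eq_sub_of_hasDerivAt_of_le (f := fun y => v y ^ 2 / 2 * tan (y / 2)) ha
    (((hv.pow 2).div_const 2).mul htan)
    (fun x hx => hasDerivAt_sq_mul_tan_half (hd x hx) (hcos x (Ioo_subset_Icc_self hx)))
    (hderiv_cont.intervalIntegrable_of_Icc ha)
  rw [← integral_congr (fun x hx => (sq_sub_sq_div_four_eq (v x) (w x) (x / 2)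
      (hcos x (by rwa [uIcc_of_le ha] at hx))).symm),
    integral_sub (hsq.intervalIntegrable_of_Icc ha) (hderiv_cont.intervalIntegrable_of_Icc ha),
    hftc]
  simp

lemma tendsto_sq_mul_tan_half (hv : ContinuousOn v (Icc 0 π)) (hw : ContinuousOn w (Icc 0 π))
    (hd : ∀ x ∈ Ioo 0 π, HasDerivAt v (w x) x) (hvπ : v π = 0) :
    Tendsto (fun a => v a ^ 2 / 2 * tan (a / 2)) (𝓝[<] π) (𝓝 0) := by
  have hnhds : Icc 0 π ∈ 𝓝[<] π := Icc_mem_nhdsLT pi_pos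
  have hv0 : Tendsto v (𝓝[<] π) (𝓝 0) :=
    hvπ ▸ (hv π ⟨pi_pos.le, le_rfl⟩).mono_of_mem_nhdsWithin hnhds
  have hwπ : Tendsto w (𝓝[<] π) (𝓝 (w π)) :=
    (hw π ⟨pi_pos.le, le_rfl⟩).mono_of_mem_nhdsWithin hnhds
  have hsin : Tendsto (fun x => sin (x / 2)) (𝓝[<] π) (𝓝 1) := by
    rw [← sin_pi_div_two]
    exact ((continuous_sin.comp (continuous_id.div_const 2)).tendsto π).mono_left
      nhdsWithin_le_nhds
  -- l'Hôpital: `v a / cos (a / 2)` stays bounded since both vanish at `π`.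
  have hratio : Tendsto (fun a => v a / cos (a / 2)) (𝓝[<] π) (𝓝 (w π / (-(1 : ℝ) / 2))) := by
    refine HasDerivAt.lhopital_zero_left_on_Ioo (g := fun x => cos (x / 2))
      (g' := fun x => -sin (x / 2) / 2) pi_pos hd
      (fun x _ => ((hasDerivAt_id' x).div_const 2).cos.congr_deriv (by ring)) (fun x hx => ?_)
      hv0 ?_ (hwπ.div (hsin.neg.div_const 2) (by norm_num))
    · exact div_ne_zero (neg_ne_zero.2 (sin_pos_of_pos_of_lt_pi (x := x / 2) (by linarith [hx.1])
        (by linarith [hx.2, pi_pos])).ne') two_ne_zero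
    · rw [← cos_pi_div_two]
      exact ((continuous_cos.comp (continuous_id.div_const 2)).tendsto π).mono_left
        nhdsWithin_le_nhds
  have := ((hv0.mul hratio).mul hsin).div_const 2
  simp only [zero_mul, zero_div] at this
  refine this.congr fun a => ?_
  rw [tan_eq_sin_div_cos]
  ring

lemma tendsto_integral_sq_add_tan_half (hv : ContinuousOn v (Icc 0 π))
    (hw : ContinuousOn w (Icc 0 π)) (hd : ∀ x ∈ Ioo 0 π, HasDerivAt v (w x) x) (hvπ : v π = 0) :
    Tendsto (fun a => ∫ x in 0..a, (w x + v x / 2 * tan (x / 2)) ^ 2) (𝓝[<] π)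
      (𝓝 (∫ x in 0..π, (w x ^ 2 - v x ^ 2 / 4))) := by
  have hprim : Tendsto (fun a => ∫ x in 0..a, (w x ^ 2 - v x ^ 2 / 4)) (𝓝[<] π)
      (𝓝 (∫ x in 0..π, (w x ^ 2 - v x ^ 2 / 4))) := by
    have hcont := continuousOn_primitive_interval (μ := volume)
      (((hw.pow 2).sub ((hv.pow 2).div_const 4)).integrableOn_Icc.mono_set
        (uIcc_of_le pi_pos.le).subset)
    rw [uIcc_of_le pi_pos.le] at hcont
    exact (hcont π ⟨pi_pos.le, le_rfl⟩).mono_of_mem_nhdsWithin (Icc_mem_nhdsLT pi_pos)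
  have hJ : (fun a => (∫ x in 0..a, (w x ^ 2 - v x ^ 2 / 4)) + v a ^ 2 / 2 * tan (a / 2))
      =ᶠ[𝓝[<] π] fun a => ∫ x in 0..a, (w x + v x / 2 * tan (x / 2)) ^ 2 := by
    filter_upwards [Ioo_mem_nhdsLT pi_pos] with a ha
    have hsub : Icc 0 a ⊆ Icc 0 π := Icc_subset_Icc_right ha.2.le
    rw [integral_sq_sub_eq_integral_sq_sub_tan ha.1.le ha.2 (hv.mono hsub) (hw.mono hsub)
      fun x hx => hd x ⟨hx.1, hx.2.trans ha.2⟩]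
    ring
  simpa using (hprim.add (tendsto_sq_mul_tan_half hv hw hd hvπ)).congr' hJ

lemma integral_sq_sub_sq_div_four_nonneg (hv : ContinuousOn v (Icc 0 π))
    (hw : ContinuousOn w (Icc 0 π)) (hd : ∀ x ∈ Ioo 0 π, HasDerivAt v (w x) x) (hvπ : v π = 0) :
    0 ≤ ∫ x in 0..π, (w x ^ 2 - v x ^ 2 / 4) :=
  ge_of_tendsto (tendsto_integral_sq_add_tan_half hv hw hd hvπ) <| by
    filter_upwards [Ioo_mem_nhdsLT pi_pos] with a ha
    exact integral_nonneg ha.1.le fun x _ => sq_nonneg _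

lemma add_tan_half_eq_zero_of_integral_eq_zero (hv : ContinuousOn v (Icc 0 π))
    (hw : ContinuousOn w (Icc 0 π)) (hd : ∀ x ∈ Ioo 0 π, HasDerivAt v (w x) x) (hvπ : v π = 0)
    (h : ∫ x in 0..π, (w x ^ 2 - v x ^ 2 / 4) = 0) :
    ∀ x ∈ Ioo 0 π, w x + v x / 2 * tan (x / 2) = 0 := by
  have hF : ∀ a < π, ContinuousOn (fun x => w x + v x / 2 * tan (x / 2)) (Icc 0 a) := fun a ha =>
    (hw.mono (Icc_subset_Icc_right ha.le)).add
      (((hv.mono (Icc_subset_Icc_right ha.le)).div_const 2).mul (continuousOn_tan_half ha))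
  intro x hx
  obtain ⟨b, hxb, hbπ⟩ := exists_between hx.2
  have hb : b ∈ Ioo 0 π := ⟨hx.1.trans hxb, hbπ⟩
  have hJb : ∫ x in 0..b, (w x + v x / 2 * tan (x / 2)) ^ 2 ≤ 0 :=
    h ▸ ge_of_tendsto (tendsto_integral_sq_add_tan_half hv hw hd hvπ) <| by
      filter_upwards [Ioo_mem_nhdsLT hb.2] with a ha
      exact integral_mono_interval le_rfl hb.1.le ha.1.le (.of_forall fun x => sq_nonneg _)
        ((hF a ha.2).pow 2 |>.intervalIntegrable_of_Icc (hb.1.le.trans ha.1.le))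
  exact eqOn_zero_of_integral_sq_eq_zero hb.1.le (hF b hb.2)
    (hJb.antisymm (integral_nonneg hb.1.le fun x _ => sq_nonneg _)) ⟨hx.1, hxb.le⟩

lemma hasDerivAt_div_cos_half {x : ℝ} (hd : HasDerivAt v (w x) x) (hx : cos (x / 2) ≠ 0) :
    HasDerivAt (fun y => v y / cos (y / 2)) ((w x + v x / 2 * tan (x / 2)) / cos (x / 2)) x := by
  refine (hd.div ((hasDerivAt_id' x).div_const 2).cos hx).congr_deriv ?_
  rw [tan_eq_sin_div_cos]
  field_simp
  ring

lemma eq_mul_cos_half_of_add_tan_half_eq_zero (hv : ContinuousOn v (Icc 0 π))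
    (hd : ∀ x ∈ Ioo 0 π, HasDerivAt v (w x) x) (hvπ : v π = 0)
    (hF : ∀ x ∈ Ioo 0 π, w x + v x / 2 * tan (x / 2) = 0) :
    ∀ x ∈ Icc 0 π, v x = v 0 * cos (x / 2) := by
  intro x hx
  rcases hx.2.eq_or_lt with rfl | hxπ
  · simp [hvπ, cos_pi_div_two]
  rcases hx.1.eq_or_lt with rfl | hx0
  · simp
  have hcos : ∀ y ∈ Icc 0 x, cos (y / 2) ≠ 0 := fun y hy =>
    (cos_half_pos ⟨by linarith [hy.1, pi_pos], by linarith [hy.2]⟩).ne'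
  obtain ⟨_, _, hslope⟩ := exists_hasDerivAt_eq_slope (fun y => v y / cos (y / 2)) (fun _ => 0)
    hx0 ((hv.mono (Icc_subset_Icc_right hxπ.le)).div (by fun_prop) hcos) fun y hy => by
      have hyπ : y ∈ Ioo 0 π := ⟨hy.1, hy.2.trans hxπ⟩
      simpa [hF y hyπ] using hasDerivAt_div_cos_half (hd y hyπ) (hcos y (Ioo_subset_Icc_self hy))
  have hslope' : v x / cos (x / 2) = v 0 := by
    rw [zero_div, cos_zero, div_one, sub_zero, eq_comm, div_eq_zero_iff, sub_eq_zero] at hslope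
    exact hslope.resolve_right hx0.ne'
  rw [← hslope', div_mul_cancel₀ _ (hcos x ⟨hx0.le, le_rfl⟩)]

lemma integral_sq_sub_sq_div_four_eq_zero_of_eq_mul_cos_half
    (hd : ∀ x ∈ Ioo 0 π, HasDerivAt v (w x) x) {μ : ℝ} (hμ : ∀ x ∈ Icc 0 π, v x = μ * cos (x / 2)) :
    ∫ x in 0..π, (w x ^ 2 - v x ^ 2 / 4) = 0 := by
  have hw : ∀ x ∈ Ioo 0 π, w x = -(μ / 2) * sin (x / 2) := fun x hx =>
    (hd x hx).unique <| by
      refine ((((hasDerivAt_id' x).div_const 2).cos.const_mul μ).congr_deriv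
        (by ring)).congr_of_eventuallyEq ?_
      filter_upwards [Icc_mem_nhds hx.1 hx.2] with y hy
      exact hμ y hy
  calc ∫ x in 0..π, (w x ^ 2 - v x ^ 2 / 4) = ∫ x in 0..π, -(μ ^ 2 / 4) * cos x :=
        integral_congr_Ioo_of_le pi_pos.le fun x hx => by
          have h2 := cos_two_mul (x / 2)
          rw [mul_div_cancel₀ x two_ne_zero] at h2
          rw [hw x hx, hμ x (Ioo_subset_Icc_self hx), h2]
          linear_combination (μ ^ 2 / 4) * sin_sq_add_cos_sq (x / 2)
    _ = 0 := by simp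

theorem integral_sq_sub_sq_div_four_eq_zero_iff (hv : ContinuousOn v (Icc 0 π))
    (hw : ContinuousOn w (Icc 0 π)) (hd : ∀ x ∈ Ioo 0 π, HasDerivAt v (w x) x) (hvπ : v π = 0) :
    ∫ x in 0..π, (w x ^ 2 - v x ^ 2 / 4) = 0 ↔ ∃ μ : ℝ, ∀ x ∈ Icc 0 π, v x = μ * cos (x / 2) :=
  ⟨fun h => ⟨v 0, eq_mul_cos_half_of_add_tan_half_eq_zero hv hd hvπ
    (add_tan_half_eq_zero_of_integral_eq_zero hv hw hd hvπ h)⟩,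
    fun ⟨_, hμ⟩ => integral_sq_sub_sq_div_four_eq_zero_of_eq_mul_cos_half hd hμ⟩

end HalfInterval

section OddReflection

variable {v : ℝ → ℝ} {c : ℝ}

lemma integral_sq_eq_two_mul_of_odd_reflect (hc : 0 ≤ c) (hv : ContinuousOn v (Icc 0 (2 * c)))
    (hodd : ∀ x ∈ Icc 0 (2 * c), v x = -v (2 * c - x)) :
    ∫ x in 0..2 * c, v x ^ 2 = 2 * ∫ x in 0..c, v x ^ 2 :=
  integral_zero_two_mul_eq_of_reflect hc ((hv.pow 2).intervalIntegrable_of_Icc (by linarith))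
    fun x hx => by
      simp only [hodd x ⟨hx.1.le, by linarith [hx.2]⟩, neg_sq]

lemma integral_deriv_sq_eq_two_mul_of_odd_reflect {w : ℝ → ℝ} (hc : 0 ≤ c)
    (hw : ContinuousOn w (Icc 0 (2 * c))) (hd : ∀ x ∈ Ioo 0 (2 * c), HasDerivAt v (w x) x)
    (hodd : ∀ x ∈ Icc 0 (2 * c), v x = -v (2 * c - x)) :
    ∫ x in 0..2 * c, deriv v x ^ 2 = 2 * ∫ x in 0..c, w x ^ 2 := by
  have hderiv : EqOn (deriv v) w (Ioo 0 (2 * c)) := fun x hx => (hd x hx).deriv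
  have hrefl : ∀ x ∈ Ioo 0 (2 * c), deriv v x = deriv v (2 * c - x) := fun x hx =>
    deriv_eq_deriv_reflect <| Filter.eventually_of_mem (Icc_mem_nhds hx.1 hx.2) hodd
  rw [integral_congr_Ioo_of_le (by linarith) fun x hx => congrArg (· ^ 2) (hderiv hx)]
  refine integral_zero_two_mul_eq_of_reflect hc
    ((hw.pow 2).intervalIntegrable_of_Icc (by linarith)) fun x hx => ?_
  have hx' : x ∈ Ioo 0 (2 * c) := ⟨hx.1, by linarith [hx.2]⟩
  have hx'' : 2 * c - x ∈ Ioo 0 (2 * c) := ⟨by linarith [hx.2], by linarith [hx.1]⟩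
  simp only [← hderiv hx', ← hderiv hx'', ← hrefl x hx']

end OddReflection

lemma exists_eq_mul_cos_half_Icc_iff {v : ℝ → ℝ}
    (hodd : ∀ φ ∈ Icc 0 (2 * π), v φ = -v (2 * π - φ)) :
    (∃ μ : ℝ, ∀ φ ∈ Icc 0 (2 * π), v φ = μ * cos (φ / 2)) ↔
      ∃ μ : ℝ, ∀ x ∈ Icc 0 π, v x = μ * cos (x / 2) := by
  refine ⟨fun ⟨μ, hμ⟩ => ⟨μ, fun x hx => hμ x ⟨hx.1, by linarith [hx.2, pi_pos]⟩⟩,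
    fun ⟨μ, hμ⟩ => ⟨μ, fun φ hφ => ?_⟩⟩
  rcases le_total φ π with hle | hle
  · exact hμ φ ⟨hφ.1, hle⟩
  · rw [hodd φ hφ, hμ _ ⟨by linarith [hφ.2], by linarith⟩,
      show (2 * π - φ) / 2 = π - φ / 2 by ring, cos_pi_sub]
    ring

/-- Poincaré-type inequality on the odd space 𝒪: for `v ∈ H¹(0,2π)` with
`v(φ) = -v(2π-φ)`, one has `(1/4)∫ v² ≤ ∫ (v')²`, with equality iff
`v = μ cos(φ/2)` for some constant `μ`. -/
theorem stmt0 (v : ℝ → ℝ)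
    (hv : ContDiffOn ℝ 1 v (Icc 0 (2 * π)))
    (hodd : ∀ φ ∈ Icc 0 (2 * π), v φ = - v (2 * π - φ)) :
    (1 / 4) * (∫ φ in (0:ℝ)..(2 * π), (v φ) ^ 2) ≤ ∫ φ in (0:ℝ)..(2 * π), (deriv v φ) ^ 2 ∧
    ((1 / 4) * (∫ φ in (0:ℝ)..(2 * π), (v φ) ^ 2) = ∫ φ in (0:ℝ)..(2 * π), (deriv v φ) ^ 2 ↔
      ∃ μ : ℝ, ∀ φ ∈ Icc 0 (2 * π), v φ = μ * Real.cos (φ / 2)) := by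
  set w := derivWithin v (Icc 0 (2 * π))
  have hvc : ContinuousOn v (Icc 0 (2 * π)) := hv.continuousOn
  have hwc : ContinuousOn w (Icc 0 (2 * π)) :=
    hv.continuousOn_derivWithin (uniqueDiffOn_Icc (by positivity)) le_rfl
  have hd : ∀ x ∈ Ioo 0 (2 * π), HasDerivAt v (w x) x := fun x hx =>
    (hv.differentiableOn one_ne_zero x (Ioo_subset_Icc_self hx)).hasDerivWithinAt.hasDerivAt
      (Icc_mem_nhds hx.1 hx.2)
  have hvπ : v π = 0 := by
    have := hodd π ⟨pi_pos.le, by linarith [pi_pos]⟩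
    rw [show 2 * π - π = π by ring] at this
    linarith
  have hsub : Icc 0 π ⊆ Icc 0 (2 * π) := Icc_subset_Icc_right (by linarith [pi_pos])
  have hdπ : ∀ x ∈ Ioo 0 π, HasDerivAt v (w x) x := fun x hx =>
    hd x ⟨hx.1, by linarith [hx.2, pi_pos]⟩
  have hreduce : (∫ φ in 0..2 * π, deriv v φ ^ 2) - 1 / 4 * ∫ φ in 0..2 * π, v φ ^ 2 =
      2 * ∫ x in 0..π, (w x ^ 2 - v x ^ 2 / 4) := by
    rw [integral_deriv_sq_eq_two_mul_of_odd_reflect pi_pos.le hwc hd hodd,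
      integral_sq_eq_two_mul_of_odd_reflect pi_pos.le hvc hodd,
      integral_sub (f := fun x => w x ^ 2) (g := fun x => v x ^ 2 / 4)
        (((hwc.mono hsub).pow 2).intervalIntegrable_of_Icc pi_pos.le)
        ((((hvc.mono hsub).pow 2).div_const 4).intervalIntegrable_of_Icc pi_pos.le),
      intervalIntegral.integral_div]
    ring
  have hnonneg := integral_sq_sub_sq_div_four_nonneg (hvc.mono hsub) (hwc.mono hsub) hdπ hvπ
  refine ⟨by linarith, ?_⟩
  rw [exists_eq_mul_cos_half_Icc_iff hodd, ← integral_sq_sub_sq_div_four_eq_zero_iff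
    (hvc.mono hsub) (hwc.mono hsub) hdπ hvπ]
  constructor <;> intro h <;> linarith
end

section
/- The function Φ(x) = e^x(π² + x² - 4x) - π² - x² - 4x satisfies Φ(0) = 0, Φ'(0) = π² - 8 > 0, Φ''(x) > 0 for all x ≥ 0; consequently Φ has no zeros in (0, ∞). -/
open Real Set

lemma strictMonoOn_Ici_of_hasDerivAt_pos {f f' : ℝ → ℝ} {a : ℝ}
    (hf : ∀ x, HasDerivAt f (f' x) x) (hf' : ∀ x, a < x → 0 < f' x) :
    StrictMonoOn f (Ici a) :=
  strictMonoOn_of_deriv_pos (convex_Ici a)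
    (fun x _ => (hf x).continuousAt.continuousWithinAt)
    (fun x hx => by
      rw [interior_Ici] at hx
      exact (hf x).deriv ▸ hf' x hx)

lemma pos_of_hasDerivAt_of_deriv2_pos {f f' f'' : ℝ → ℝ} {a : ℝ}
    (hf : ∀ x, HasDerivAt f (f' x) x) (hf' : ∀ x, HasDerivAt f' (f'' x) x)
    (hfa : f a = 0) (hf'a : 0 ≤ f' a) (hf'' : ∀ x, a < x → 0 < f'' x) {x : ℝ} (hx : a < x) :
    0 < f x := by
  have hf'_pos : ∀ y, a < y → 0 < f' y := fun y hy =>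
    hf'a.trans_lt (strictMonoOn_Ici_of_hasDerivAt_pos hf' hf'' self_mem_Ici hy.le hy)
  simpa [hfa] using strictMonoOn_Ici_of_hasDerivAt_pos hf hf'_pos self_mem_Ici hx.le hx

noncomputable def phi (x : ℝ) : ℝ := exp x * (π ^ 2 + x ^ 2 - 4 * x) - π ^ 2 - x ^ 2 - 4 * x

noncomputable def phiDeriv (x : ℝ) : ℝ := exp x * (π ^ 2 + x ^ 2 - 2 * x - 4) - 2 * x - 4

noncomputable def phiDeriv2 (x : ℝ) : ℝ := exp x * (π ^ 2 + x ^ 2 - 6) - 2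

lemma hasDerivAt_phi (x : ℝ) : HasDerivAt phi (phiDeriv x) x := by
  have hq : HasDerivAt (fun x : ℝ => π ^ 2 + x ^ 2 - 4 * x) (2 * x - 4) x :=
    (((hasDerivAt_pow 2 x).const_add (π ^ 2)).sub
      ((hasDerivAt_id x).const_mul 4)).congr_deriv (by simp)
  exact (((((hasDerivAt_exp x).mul hq).sub_const (π ^ 2)).sub (hasDerivAt_pow 2 x)).sub
    ((hasDerivAt_id x).const_mul 4)).congr_deriv (by rw [phiDeriv]; ring)

lemma hasDerivAt_phiDeriv (x : ℝ) : HasDerivAt phiDeriv (phiDeriv2 x) x := by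
  have hq : HasDerivAt (fun x : ℝ => π ^ 2 + x ^ 2 - 2 * x - 4) (2 * x - 2) x :=
    ((((hasDerivAt_pow 2 x).const_add (π ^ 2)).sub
      ((hasDerivAt_id x).const_mul 2)).sub_const 4).congr_deriv (by simp)
  exact ((((hasDerivAt_exp x).mul hq).sub ((hasDerivAt_id x).const_mul 2)).sub_const 4).congr_deriv
    (by rw [phiDeriv2]; ring)

lemma pi_sq_sub_eight_pos : 0 < π ^ 2 - 8 := by
  nlinarith [pi_gt_three]

lemma phiDeriv2_pos {x : ℝ} (hx : 0 ≤ x) : 0 < phiDeriv2 x := by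
  have hquad : 3 < π ^ 2 + x ^ 2 - 6 := by nlinarith [pi_gt_three, sq_nonneg x]
  have : 3 ≤ exp x * (π ^ 2 + x ^ 2 - 6) := by nlinarith [one_le_exp hx]
  unfold phiDeriv2
  linarith

/-- Properties of `Φ(x) = eˣ(π² + x² - 4x) - π² - x² - 4x`: it vanishes at `0`,
has positive derivative `π² - 8` at `0`, is strictly convex on `[0,∞)`, and hence
has no zeros in `(0,∞)`. -/
theorem stmt1 :
    let Φ : ℝ → ℝ := fun x => Real.exp x * (π ^ 2 + x ^ 2 - 4 * x) - π ^ 2 - x ^ 2 - 4 * x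
    Φ 0 = 0 ∧ deriv Φ 0 = π ^ 2 - 8 ∧ (0 : ℝ) < π ^ 2 - 8 ∧
      (∀ x : ℝ, 0 ≤ x → 0 < deriv (deriv Φ) x) ∧
      (∀ x : ℝ, 0 < x → Φ x ≠ 0) := by
  intro Φ
  have hΦ' : deriv Φ = phiDeriv := funext fun x => (hasDerivAt_phi x).deriv
  have hphi0 : phi 0 = 0 := by rw [phi, exp_zero]; ring
  have hphiDeriv0 : phiDeriv 0 = π ^ 2 - 8 := by rw [phiDeriv, exp_zero]; ring
  refine ⟨hphi0, hΦ' ▸ hphiDeriv0, pi_sq_sub_eight_pos, fun x hx => ?_, fun x hx => ?_⟩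
  · rw [hΦ', (hasDerivAt_phiDeriv x).deriv]
    exact phiDeriv2_pos hx
  · exact (pos_of_hasDerivAt_of_deriv2_pos hasDerivAt_phi hasDerivAt_phiDeriv hphi0
      (hphiDeriv0 ▸ pi_sq_sub_eight_pos.le) (fun y hy => phiDeriv2_pos hy.le) hx).ne'
end

section
/- Let Ψ(x) := 8x cos x - (π² - 4x²) sin x. Then Ψ'(x) = (4x² + 8 - π²) cos x, Ψ(0) = Ψ(π/2) = 0, and Ψ has no zero in the open interval (0, π/2). -/
open Real Set

/-!
Ψ' = (4x² + 8 - π²) cos x = 4 (x - c)(x + c) cos x with `c = √(π² - 8) / 2 ∈ (0, π/2)`, so Ψ strictly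
decreases on `[0, c]` and strictly increases on `[c, π/2]`. As Ψ vanishes at both endpoints, it is
negative in between.
-/

theorem lt_max_of_strictAntiOn_of_strictMonoOn {α β : Type*} [LinearOrder α] [LinearOrder β]
    {f : α → β} {a b c x : α} (hac : a ≤ c) (hcb : c ≤ b)
    (hanti : StrictAntiOn f (Icc a c)) (hmono : StrictMonoOn f (Icc c b)) (hx : x ∈ Ioo a b) :
    f x < max (f a) (f b) := by
  rcases le_or_gt x c with hxc | hcx
  · exact lt_max_of_lt_left <|
      hanti ⟨le_rfl, hac⟩ ⟨hx.1.le, hxc⟩ hx.1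
  · exact lt_max_of_lt_right <|
      hmono ⟨hcx.le, hx.2.le⟩ ⟨hcb, le_rfl⟩ hx.2

namespace EigenvalueEquation

noncomputable def psi (x : ℝ) : ℝ := 8 * x * cos x - (π ^ 2 - 4 * x ^ 2) * sin x

theorem hasDerivAt_psi (x : ℝ) : HasDerivAt psi ((4 * x ^ 2 + 8 - π ^ 2) * cos x) x := by
  have h8x : HasDerivAt (fun x : ℝ => 8 * x) 8 x := by
    simpa using (hasDerivAt_id x).const_mul (8 : ℝ)
  have hquad : HasDerivAt (fun x : ℝ => π ^ 2 - 4 * x ^ 2) (-(8 * x)) x := by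
    refine (((hasDerivAt_pow 2 x).const_mul (4 : ℝ)).const_sub (π ^ 2)).congr_deriv ?_
    ring
  refine ((h8x.mul (hasDerivAt_cos x)).sub (hquad.mul (hasDerivAt_sin x))).congr_deriv ?_
  ring

theorem psi_zero : psi 0 = 0 := by simp [psi]

theorem psi_pi_div_two : psi (π / 2) = 0 := by
  simp only [psi, cos_pi_div_two, sin_pi_div_two]
  ring

theorem eight_lt_pi_sq : 8 < π ^ 2 := by nlinarith [pi_gt_three]

noncomputable def crit : ℝ := √(π ^ 2 - 8) / 2

theorem crit_pos : 0 < crit := by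
  have := eight_lt_pi_sq
  unfold crit
  positivity

theorem crit_lt_pi_div_two : crit < π / 2 := by
  have : √(π ^ 2 - 8) < π := by
    rw [sqrt_lt' pi_pos]
    linarith [pi_pos]
  unfold crit
  linarith

theorem four_mul_sq_add_eight_sub_pi_sq (x : ℝ) :
    4 * x ^ 2 + 8 - π ^ 2 = 4 * (x - crit) * (x + crit) := by
  have : crit ^ 2 = (π ^ 2 - 8) / 4 := by
    rw [crit, div_pow, sq_sqrt (by linarith [eight_lt_pi_sq])]
    norm_num
  linear_combination 4 * this

theorem strictAntiOn_psi : StrictAntiOn psi (Icc 0 crit) := by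
  refine strictAntiOn_of_deriv_neg (convex_Icc 0 crit)
    (fun x _ => (hasDerivAt_psi x).continuousAt.continuousWithinAt) fun x hx => ?_
  rw [interior_Icc] at hx
  have hcos : 0 < cos x :=
    cos_pos_of_mem_Ioo ⟨by linarith [hx.1, pi_pos], by linarith [hx.2, crit_lt_pi_div_two]⟩
  have hfactor : 4 * (x - crit) * (x + crit) < 0 :=
    mul_neg_of_neg_of_pos (by linarith [hx.2]) (by linarith [hx.1, crit_pos])
  rw [(hasDerivAt_psi x).deriv, four_mul_sq_add_eight_sub_pi_sq]
  exact mul_neg_of_neg_of_pos hfactor hcos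

theorem strictMonoOn_psi : StrictMonoOn psi (Icc crit (π / 2)) := by
  refine strictMonoOn_of_deriv_pos (convex_Icc crit (π / 2))
    (fun x _ => (hasDerivAt_psi x).continuousAt.continuousWithinAt) fun x hx => ?_
  rw [interior_Icc] at hx
  have hcos : 0 < cos x := cos_pos_of_mem_Ioo ⟨by linarith [hx.1, crit_pos, pi_pos], hx.2⟩
  have hfactor : 0 < 4 * (x - crit) * (x + crit) :=
    mul_pos (by linarith [hx.1]) (by linarith [hx.1, crit_pos])
  rw [(hasDerivAt_psi x).deriv, four_mul_sq_add_eight_sub_pi_sq]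
  exact mul_pos hfactor hcos

theorem psi_neg {x : ℝ} (hx : x ∈ Ioo 0 (π / 2)) : psi x < 0 := by
  simpa [psi_zero, psi_pi_div_two] using
    lt_max_of_strictAntiOn_of_strictMonoOn crit_pos.le crit_lt_pi_div_two.le
      strictAntiOn_psi strictMonoOn_psi hx

end EigenvalueEquation

/-- Properties of `Ψ(x) = 8x cos x - (π² - 4x²) sin x`: its derivative is
`(4x² + 8 - π²) cos x`, it vanishes at `0` and `π/2`, and has no zero in `(0, π/2)`. -/
theorem stmt2 :
    let Ψ : ℝ → ℝ := fun x => 8 * x * Real.cos x - (π ^ 2 - 4 * x ^ 2) * Real.sin x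
    (∀ x : ℝ, deriv Ψ x = (4 * x ^ 2 + 8 - π ^ 2) * Real.cos x) ∧
    Ψ 0 = 0 ∧ Ψ (π / 2) = 0 ∧
    (∀ x ∈ Ioo (0 : ℝ) (π / 2), Ψ x ≠ 0) :=
  ⟨fun x => (EigenvalueEquation.hasDerivAt_psi x).deriv, EigenvalueEquation.psi_zero,
    EigenvalueEquation.psi_pi_div_two, fun _ hx => (EigenvalueEquation.psi_neg hx).ne⟩
end

section
/- If (ν_k)_{k≥1} denotes the increasing sequence of positive solutions of ν cos(νπ) = (π/2)(1/4 - ν²) sin(νπ), then ν_1 = 1/2, ν_2 ∈ (3/2, 2), ν_k ∈ (k-1, k) for every k ≥ 3, and lim_{k→∞} ν_k / k = 1. -/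
/-!
Let `F x = charFn x = x cos πx - (π/2)(1/4 - x²) sin πx`, so that
`F' x = cos πx · (1 + (π²/2)(x² - 1/4))`. For `x > 1/2` the second factor is positive, so
between consecutive half-integers, where `cos πx` keeps its sign, `F` is strictly monotone.
As `F (k + 1/2) = (-1)ᵏ (π/2) k (k+1)` and `F (k + 1) = (-1)ᵏ⁺¹ (k + 1)`, each window
`[k + 1/2, k + 3/2]` contains exactly one root, and it lies in `[k + 1/2, k + 1)` (it is `1/2`
for `k = 0`). On `(0, 1/2)` the second factor changes sign once, so `F` decreases from `F 0 = 0`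
and then increases to `F (1/2) = 0`: there are no roots there. Hence the positive roots form a
strictly increasing sequence `charRoot k ∈ [k + 1/2, k + 1)`, `k ≥ 0`, and any strictly
increasing enumeration of them must be this sequence.
-/

open Real Set Filter Topology

noncomputable def charFn (x : ℝ) : ℝ :=
  x * cos (x * π) - π / 2 * (1 / 4 - x ^ 2) * sin (x * π)

lemma continuous_charFn : Continuous charFn := by
  unfold charFn; fun_prop

lemma hasDerivAt_charFn (x : ℝ) :
    HasDerivAt charFn (cos (x * π) * (1 + π ^ 2 / 2 * (x ^ 2 - 1 / 4))) x := by
  have hc := (hasDerivAt_mul_const (x := x) π).cos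
  have hs := (hasDerivAt_mul_const (x := x) π).sin
  have hpoly := ((hasDerivAt_pow 2 x).const_sub (1 / 4)).const_mul (π / 2)
  refine (((hasDerivAt_id' x).fun_mul hc).fun_sub (hpoly.fun_mul hs)).congr_deriv ?_
  norm_num
  ring

lemma charFn_half : charFn (1 / 2) = 0 := by
  rw [charFn, show (1 / 2 : ℝ) * π = π / 2 by ring, cos_pi_div_two, sin_pi_div_two]
  ring

lemma charFn_natCast (n : ℕ) : charFn n = (-1) ^ n * n := by
  rw [charFn, cos_nat_mul_pi, sin_nat_mul_pi]
  ring

lemma charFn_natCast_add_half (n : ℕ) :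
    charFn (n + 1 / 2) = (-1) ^ n * (π / 2 * n * (n + 1)) := by
  rw [charFn, show ((n : ℝ) + 1 / 2) * π = π / 2 + n * π by ring, cos_add_nat_mul_pi,
    sin_add_nat_mul_pi, cos_pi_div_two, sin_pi_div_two]
  ring

lemma neg_one_pow_mul_cos_pos {n : ℕ} {x : ℝ} (hx : x ∈ Ioo (n - 1 / 2 : ℝ) (n + 1 / 2)) :
    0 < (-1) ^ n * cos (x * π) := by
  rw [← cos_sub_nat_mul_pi, ← sub_mul]
  apply cos_pos_of_mem_Ioo
  constructor <;> nlinarith [hx.1, hx.2, pi_pos]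

lemma charFn_neg_of_mem_Ioo {x : ℝ} (hx : x ∈ Ioo 0 (1 / 2 : ℝ)) : charFn x < 0 := by
  have hπ : 8 < π ^ 2 := by nlinarith [pi_gt_three]
  set a := √(1 / 4 - 2 / π ^ 2)
  have ha : π ^ 2 * (a ^ 2 - 1 / 4) = -2 := by
    rw [sq_sqrt (by rw [sub_nonneg, div_le_iff₀ (by positivity)]; linarith)]
    field_simp
    ring
  have ha0 : 0 < a := sqrt_pos.2 (by rw [sub_pos, div_lt_iff₀ (by positivity)]; linarith)
  have ha1 : a < 1 / 2 := by
    have : a ^ 2 - 1 / 4 < 0 := neg_of_mul_neg_right (by linarith) (sq_nonneg π)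
    nlinarith
  have hcos {y : ℝ} (hy : y ∈ Ioo 0 (1 / 2 : ℝ)) : 0 < cos (y * π) :=
    cos_pos_of_mem_Ioo ⟨by nlinarith [hy.1, pi_pos], by nlinarith [hy.2, pi_pos]⟩
  have hanti : StrictAntiOn charFn (Icc 0 a) := by
    refine strictAntiOn_of_hasDerivWithinAt_neg (convex_Icc _ _) continuous_charFn.continuousOn
      (fun y _ => (hasDerivAt_charFn y).hasDerivWithinAt) fun y hy => ?_
    rw [interior_Icc] at hy
    refine mul_neg_of_pos_of_neg (hcos ⟨hy.1, hy.2.trans ha1⟩) ?_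
    have := pow_lt_pow_left₀ hy.2 hy.1.le two_ne_zero
    nlinarith [mul_lt_mul_of_pos_left this (by positivity : 0 < π ^ 2)]
  have hmono : StrictMonoOn charFn (Icc a (1 / 2)) := by
    refine strictMonoOn_of_hasDerivWithinAt_pos (convex_Icc _ _) continuous_charFn.continuousOn
      (fun y _ => (hasDerivAt_charFn y).hasDerivWithinAt) fun y hy => ?_
    rw [interior_Icc] at hy
    refine mul_pos (hcos ⟨ha0.trans hy.1, hy.2⟩) ?_
    have := pow_lt_pow_left₀ hy.1 ha0.le two_ne_zero
    nlinarith [mul_lt_mul_of_pos_left this (by positivity : 0 < π ^ 2)]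
  rcases le_total x a with h | h
  · simpa [charFn] using hanti ⟨le_rfl, ha0.le⟩ ⟨hx.1.le, h⟩ hx.1
  · exact charFn_half ▸ hmono ⟨h, hx.2.le⟩ ⟨ha1.le, le_rfl⟩ hx.2

lemma strictMonoOn_neg_one_pow_mul_charFn (k : ℕ) :
    StrictMonoOn (fun x => (-1) ^ (k + 1) * charFn x) (Icc (k + 1 / 2 : ℝ) (k + 3 / 2)) := by
  refine strictMonoOn_of_hasDerivWithinAt_pos (convex_Icc _ _)
    (continuous_charFn.const_mul _).continuousOn
    (fun x _ => ((hasDerivAt_charFn x).const_mul _).hasDerivWithinAt) fun x hx => ?_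
  rw [interior_Icc] at hx
  have hcos : 0 < (-1) ^ (k + 1) * cos (x * π) :=
    neg_one_pow_mul_cos_pos ⟨by push_cast; linarith [hx.1], by push_cast; linarith [hx.2]⟩
  have hx2 : 1 / 4 < x ^ 2 := by nlinarith [hx.1, k.cast_nonneg (α := ℝ)]
  rw [← mul_assoc]
  exact mul_pos hcos (by positivity)

lemma charFn_injOn (k : ℕ) : InjOn charFn (Icc (k + 1 / 2 : ℝ) (k + 3 / 2)) :=
  fun _ hx _ hy h => (strictMonoOn_neg_one_pow_mul_charFn k).injOn hx hy (by simp only [h])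

lemma exists_charFn_eq_zero (k : ℕ) : ∃ x ∈ Ico (k + 1 / 2 : ℝ) (k + 1), charFn x = 0 := by
  have hsign : ((-1 : ℝ) ^ (k + 1)) * (-1) ^ k = -1 := by
    rw [pow_succ, mul_right_comm, ← pow_add, ← two_mul, pow_mul]; norm_num
  have hleft : (-1) ^ (k + 1) * charFn (k + 1 / 2) = -(π / 2 * k * (k + 1)) := by
    rw [charFn_natCast_add_half, ← mul_assoc, hsign]
    ring
  have hright : (-1) ^ (k + 1) * charFn (k + 1) = k + 1 := by
    rw [← Nat.cast_succ, charFn_natCast, ← mul_assoc, ← pow_add, ← two_mul, pow_mul]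
    norm_num
  have h0 : (0 : ℝ) ∈
      Ico ((-1) ^ (k + 1) * charFn (k + 1 / 2)) ((-1) ^ (k + 1) * charFn (k + 1)) := by
    rw [hleft, hright]
    exact ⟨neg_nonpos.2 (by positivity), by positivity⟩
  obtain ⟨x, hx, hx0⟩ := intermediate_value_Ico (by linarith)
    (continuous_charFn.const_mul ((-1 : ℝ) ^ (k + 1))).continuousOn h0
  exact ⟨x, hx, by simpa using hx0⟩

noncomputable def charRoot (k : ℕ) : ℝ := (exists_charFn_eq_zero k).choose

lemma charRoot_mem_Ico (k : ℕ) : charRoot k ∈ Ico (k + 1 / 2 : ℝ) (k + 1) :=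
  (exists_charFn_eq_zero k).choose_spec.1

lemma charFn_charRoot (k : ℕ) : charFn (charRoot k) = 0 :=
  (exists_charFn_eq_zero k).choose_spec.2

lemma charRoot_zero : charRoot 0 = 1 / 2 := by
  have h := charRoot_mem_Ico 0
  norm_num at h
  exact charFn_injOn 0 (by norm_num; constructor <;> linarith) (by norm_num)
    ((charFn_charRoot 0).trans charFn_half.symm)

lemma charRoot_mem_Ioo {k : ℕ} (hk : 1 ≤ k) : charRoot k ∈ Ioo (k + 1 / 2 : ℝ) (k + 1) := by
  refine ⟨(charRoot_mem_Ico k).1.lt_of_ne fun h => ?_, (charRoot_mem_Ico k).2⟩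
  have := charFn_charRoot k
  rw [← h, charFn_natCast_add_half] at this
  have hk' : (0 : ℝ) < k := by exact_mod_cast hk
  exact mul_ne_zero (pow_ne_zero _ (by norm_num)) (by positivity) this

lemma strictMono_charRoot : StrictMono charRoot :=
  strictMono_nat_of_lt_succ fun k => by
    have := (charRoot_mem_Ico k).2
    have := (charRoot_mem_Ico (k + 1)).1
    push_cast at *
    linarith

lemma range_charRoot : range charRoot = {x | 0 < x ∧ charFn x = 0} := by
  ext x
  constructor
  · rintro ⟨k, rfl⟩
    exact ⟨by linarith [(charRoot_mem_Ico k).1, k.cast_nonneg (α := ℝ)], charFn_charRoot k⟩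
  · rintro ⟨hx0, hx⟩
    have hx1 : 1 / 2 ≤ x := not_lt.1 fun h => (charFn_neg_of_mem_Ioo ⟨hx0, h⟩).ne hx
    have hfl := Nat.floor_le (a := x - 1 / 2) (by linarith)
    have hfl' := Nat.lt_floor_add_one (x - 1 / 2)
    have hroot := charRoot_mem_Ico ⌊x - 1 / 2⌋₊
    exact ⟨_, charFn_injOn _ ⟨hroot.1, by linarith [hroot.2]⟩ ⟨by linarith, by linarith⟩
      ((charFn_charRoot _).trans hx.symm)⟩

lemma tendsto_div_natCast_of_mem_Ioo {u : ℕ → ℝ} {c : ℝ}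
    (h : ∀ᶠ k : ℕ in atTop, u k ∈ Ioo ((k : ℝ) - c) k) :
    Tendsto (fun k => u k / k) atTop (𝓝 1) := by
  have hlow : Tendsto (fun k : ℕ => 1 - c / k) atTop (𝓝 1) := by
    simpa using tendsto_const_nhds.sub (tendsto_const_div_atTop_nhds_zero_nat c)
  refine tendsto_of_tendsto_of_tendsto_of_le_of_le' hlow tendsto_const_nhds ?_ ?_
  · filter_upwards [h, eventually_gt_atTop 0] with k hk hk0
    have hk0' : (0 : ℝ) < k := by exact_mod_cast hk0
    rw [le_div_iff₀ hk0', sub_mul, div_mul_cancel₀ _ hk0'.ne']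
    linarith [hk.1]
  · filter_upwards [h, eventually_gt_atTop 0] with k hk hk0
    exact div_le_one_of_le₀ hk.2.le (Nat.cast_nonneg k)

/-- If `(ν_k)_{k≥1}` is the increasing enumeration of the positive solutions of
`ν cos(νπ) = (π/2)(1/4 - ν²) sin(νπ)`, then `ν₁ = 1/2`, `ν₂ ∈ (3/2, 2)`,
`ν_k ∈ (k-1, k)` for `k ≥ 3`, and `ν_k / k → 1`. -/
theorem stmt4 (ν : ℕ → ℝ)
    (hmono : ∀ j k : ℕ, 1 ≤ j → j < k → ν j < ν k)
    (hsol : ∀ k : ℕ, 1 ≤ k → 0 < ν k ∧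
      ν k * Real.cos (ν k * π) = (π / 2) * (1 / 4 - (ν k) ^ 2) * Real.sin (ν k * π))
    (hall : ∀ x : ℝ, 0 < x →
      x * Real.cos (x * π) = (π / 2) * (1 / 4 - x ^ 2) * Real.sin (x * π) →
      ∃ k : ℕ, 1 ≤ k ∧ ν k = x) :
    ν 1 = 1 / 2 ∧ ν 2 ∈ Ioo (3 / 2 : ℝ) 2 ∧
    (∀ k : ℕ, 3 ≤ k → ν k ∈ Ioo ((k : ℝ) - 1) (k : ℝ)) ∧
    Tendsto (fun k : ℕ => ν k / (k : ℝ)) atTop (nhds 1) := by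
  have hstrict : StrictMono fun k => ν (k + 1) := fun j k h => hmono _ _ (by omega) (by omega)
  have hrange : range (fun k => ν (k + 1)) = {x | 0 < x ∧ charFn x = 0} := by
    ext x
    constructor
    · rintro ⟨k, rfl⟩
      exact ⟨(hsol _ k.succ_pos).1, sub_eq_zero.2 (hsol _ k.succ_pos).2⟩
    · rintro ⟨hx0, hx⟩
      obtain ⟨k, hk, rfl⟩ := hall x hx0 (sub_eq_zero.1 hx)
      exact ⟨k - 1, by simp only [Nat.sub_add_cancel hk]⟩
  have hν : ∀ k, ν (k + 1) = charRoot k :=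
    congrFun ((hstrict.range_inj strictMono_charRoot).1 (hrange.trans range_charRoot.symm))
  have hν_mem : ∀ k : ℕ, 2 ≤ k → ν k ∈ Ioo ((k : ℝ) - 1 / 2) k := by
    intro k hk
    obtain ⟨j, rfl⟩ : ∃ j, k = j + 1 := ⟨k - 1, by omega⟩
    have := charRoot_mem_Ioo (k := j) (by omega)
    rw [hν]
    push_cast
    exact ⟨by linarith [this.1], this.2⟩
  have hν_mem_three : ∀ k : ℕ, 3 ≤ k → ν k ∈ Ioo ((k : ℝ) - 1) k := fun k hk =>
    ⟨by linarith [(hν_mem k (by omega)).1], (hν_mem k (by omega)).2⟩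
  refine ⟨by rw [hν 0, charRoot_zero], by convert hν_mem 2 le_rfl using 2 <;> norm_num,
    hν_mem_three, tendsto_div_natCast_of_mem_Ioo (eventually_atTop.2 ⟨3, hν_mem_three⟩)⟩
end

section
/- There exists η > 0 such that: for every continuous convex nonnegative function h on [0,3] satisfying h'' ≥ ĉ h in the distributional sense (for a fixed ĉ > 0), if ∫₁² h ≥ (1-η)∫₀¹ h, then ∫₂³ h ≥ (1+η)∫₁² h. -/
/-!
Test the subsolution inequality against `φ = T ∗ ρ`, where `T = 𝟙[0,1] ∗ 𝟙[0,1]` is the tent on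
`[0, 2]` and `ρ ≤ 1` is a bump supported in `(0, 1)`. As `T'' = δ₀ - 2δ₁ + δ₂`, we get
`φ'' = ρ - 2ρ(· - 1) + ρ(· - 2)`, hence `∫ h φ'' = ∫₀¹ ρ(y) (h(y) - 2h(y+1) + h(y+2)) dy`.
Convexity makes the second difference nonnegative, so this is at most `∫₀¹ h - 2∫₁² h + ∫₂³ h`;
and `φ ≥ 1/8` on `[1, 2]` bounds `ĉ ∫ h φ` below by `ĉ/8 ∫₁² h`. The resulting gain
`ĉ/8 ∫₁² h ≤ ∫₀¹ h - 2∫₁² h + ∫₂³ h` gives the claim with `η = min (1/2) (ĉ/24)`.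
-/

open Real Set intervalIntegral

noncomputable def movingIntegral (f : ℝ → ℝ) (x : ℝ) : ℝ := ∫ t in (x - 1)..x, f t

section movingIntegral

variable {f : ℝ → ℝ}

lemma hasDerivAt_movingIntegral (hf : Continuous f) (x : ℝ) :
    HasDerivAt (movingIntegral f) (f x - f (x - 1)) x := by
  have hsub : movingIntegral f = fun x => (∫ t in (0:ℝ)..x, f t) - ∫ t in (0:ℝ)..(x - 1), f t :=
    funext fun x =>
      (integral_interval_sub_left (hf.intervalIntegrable _ _) (hf.intervalIntegrable _ _)).symm
  have hprim (y : ℝ) := (hf.integral_hasStrictDerivAt 0 y).hasDerivAt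
  rw [hsub]
  exact (hprim x).sub (HasDerivAt.comp_sub_const x 1 (hprim (x - 1)))

lemma deriv_movingIntegral (hf : Continuous f) :
    deriv (movingIntegral f) = fun x => f x - f (x - 1) :=
  funext fun x => (hasDerivAt_movingIntegral hf x).deriv

lemma contDiff_movingIntegral {n : ℕ} (hf : ContDiff ℝ n f) :
    ContDiff ℝ (n + 1) (movingIntegral f) := by
  refine contDiff_succ_iff_deriv.2
    ⟨fun x => (hasDerivAt_movingIntegral hf.continuous x).differentiableAt, by simp, ?_⟩
  rw [deriv_movingIntegral hf.continuous]
  exact hf.sub (hf.comp (contDiff_id.sub contDiff_const))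

lemma continuous_movingIntegral (hf : Continuous f) : Continuous (movingIntegral f) :=
  (contDiff_movingIntegral (n := 0) (by simpa using hf)).continuous

lemma deriv_deriv_movingIntegral_movingIntegral (hf : Continuous f) (x : ℝ) :
    deriv (deriv (movingIntegral (movingIntegral f))) x = f x - 2 * f (x - 1) + f (x - 2) := by
  rw [deriv_movingIntegral (continuous_movingIntegral hf), ((hasDerivAt_movingIntegral hf x).fun_sub
    (HasDerivAt.comp_sub_const x 1 (hasDerivAt_movingIntegral hf (x - 1)))).deriv]
  ring_nf

lemma movingIntegral_nonneg (hf : ∀ t, 0 ≤ f t) (x : ℝ) : 0 ≤ movingIntegral f x :=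
  integral_nonneg (by linarith) fun t _ => hf t

lemma movingIntegral_eq_zero_of_notMem {a b : ℝ} (hf : ∀ t ∉ Ioo a b, f t = 0) {x : ℝ}
    (hx : x ∉ Ioo a (b + 1)) : movingIntegral f x = 0 := by
  have hvanish : ∀ t ∈ uIcc (x - 1) x, f t = 0 := by
    intro t ht
    rw [uIcc_of_le (by linarith)] at ht
    refine hf t fun htab => hx ⟨?_, ?_⟩
    · by_contra! h; linarith [htab.1, ht.2]
    · by_contra! h; linarith [htab.2, ht.1]
  simp [movingIntegral, integral_congr hvanish]

lemma mul_le_movingIntegral {m p ℓ x : ℝ} (hf : Continuous f) (hf0 : ∀ t, 0 ≤ f t)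
    (hm : ∀ t ∈ Icc p (p + ℓ), m ≤ f t) (hℓ : 0 ≤ ℓ) (hp : x - 1 ≤ p) (hpℓ : p + ℓ ≤ x) :
    m * ℓ ≤ movingIntegral f x := calc
  m * ℓ = ∫ _ in p..(p + ℓ), m := by simp [mul_comm]
  _ ≤ ∫ t in p..(p + ℓ), f t :=
      integral_mono_on (by linarith) (by simp) (hf.intervalIntegrable _ _) hm
  _ ≤ movingIntegral f x := integral_mono_interval hp (by linarith) hpℓ
      (Filter.Eventually.of_forall hf0) (hf.intervalIntegrable _ _)

end movingIntegral

noncomputable def unitBump : ContDiffBump (1 / 2 : ℝ) := ⟨1 / 4, 3 / 8, by norm_num, by norm_num⟩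

lemma unitBump_eq_zero {t : ℝ} (ht : t ∉ Ioo (1 / 8) (7 / 8)) : unitBump t = 0 := by
  rw [← Function.notMem_support, unitBump.support_eq, Real.ball_eq_Ioo]
  norm_num [unitBump]
  exact fun h1 => le_of_not_gt fun h2 => ht ⟨h1, h2⟩

lemma unitBump_eq_one {t : ℝ} (ht : t ∈ Icc (1 / 4) (3 / 4)) : unitBump t = 1 := by
  refine unitBump.one_of_mem_closedBall ?_
  rw [Real.closedBall_eq_Icc]
  norm_num [unitBump]
  exact ht

noncomputable def tentConvBump : ℝ → ℝ := movingIntegral (movingIntegral unitBump)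

lemma contDiff_tentConvBump : ContDiff ℝ 2 tentConvBump :=
  contDiff_movingIntegral (n := 1)
    (contDiff_movingIntegral (n := 0) (by simpa using unitBump.continuous))

lemma tentConvBump_nonneg (x : ℝ) : 0 ≤ tentConvBump x :=
  movingIntegral_nonneg (movingIntegral_nonneg fun _ => unitBump.nonneg) x

lemma tsupport_tentConvBump_subset : tsupport tentConvBump ⊆ Ioo 0 3 := by
  have hsupp : Function.support tentConvBump ⊆ Icc (1 / 8) (23 / 8) := fun x hx => by
    by_contra hx'
    refine hx (movingIntegral_eq_zero_of_notMem (a := 1 / 8) (b := 15 / 8)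
      (fun s hs => movingIntegral_eq_zero_of_notMem (fun t ht => unitBump_eq_zero ht) ?_) ?_)
    · rwa [show (7 / 8 : ℝ) + 1 = 15 / 8 by norm_num]
    · exact fun h => hx' ⟨h.1.le, by linarith [h.2]⟩
  exact (closure_minimal hsupp isClosed_Icc).trans (Icc_subset_Ioo (by norm_num) (by norm_num))

lemma one_div_eight_le_tentConvBump {x : ℝ} (hx : x ∈ Icc (1 : ℝ) 2) :
    1 / 8 ≤ tentConvBump x := by
  have hR0 : ∀ s, 0 ≤ movingIntegral unitBump s :=
    movingIntegral_nonneg fun _ => unitBump.nonneg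
  have hR : ∀ s ∈ Icc (3 / 4 : ℝ) (3 / 4 + 1 / 2), 1 / 2 ≤ movingIntegral unitBump s := by
    intro s hs
    have := mul_le_movingIntegral (m := 1) (p := 1 / 4) (ℓ := 1 / 2) (x := s)
      unitBump.continuous (fun _ => unitBump.nonneg)
      (fun t ht => (unitBump_eq_one (by norm_num at ht ⊢; exact ht)).ge)
      (by norm_num) (by linarith [hs.2]) (by linarith [hs.1])
    linarith
  have hR_cont := continuous_movingIntegral unitBump.continuous
  rcases le_total x (7 / 4) with h | h
  · have := mul_le_movingIntegral (p := 3 / 4) (ℓ := 1 / 4) (x := x) hR_cont hR0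
      (fun s hs => hR s ⟨hs.1, by linarith [hs.2]⟩) (by norm_num) (by linarith)
      (by linarith [hx.1])
    unfold tentConvBump; linarith
  · have := mul_le_movingIntegral (p := 1) (ℓ := 1 / 4) (x := x) hR_cont hR0
      (fun s hs => hR s ⟨by linarith [hs.1], by linarith [hs.2]⟩) (by norm_num)
      (by linarith [hx.2]) (by linarith)
    unfold tentConvBump; linarith

lemma ConvexOn.two_mul_le_add {s : Set ℝ} {h : ℝ → ℝ} (hconv : ConvexOn ℝ s h) {x d : ℝ}
    (hx : x ∈ s) (hy : x + 2 * d ∈ s) : 2 * h (x + d) ≤ h x + h (x + 2 * d) := by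
  have := hconv.2 hx hy (by norm_num : (0:ℝ) ≤ 1 / 2) (by norm_num : (0:ℝ) ≤ 1 / 2) (by norm_num)
  rw [smul_eq_mul, smul_eq_mul, smul_eq_mul, smul_eq_mul,
    show 1 / 2 * x + 1 / 2 * (x + 2 * d) = x + d by ring] at this
  linarith

lemma integral_zero_three_eq_integral_zero_one {F : ℝ → ℝ}
    (hF : IntervalIntegrable F MeasureTheory.volume 0 3) :
    ∫ x in (0:ℝ)..3, F x = ∫ y in (0:ℝ)..1, (F y + F (y + 1) + F (y + 2)) := by
  have hF' {a b : ℝ} (ha : 0 ≤ a) (hb : b ≤ 3) (hab : a ≤ b) :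
      IntervalIntegrable F MeasureTheory.volume a b :=
    hF.mono_set (by rw [uIcc_of_le hab, uIcc_of_le (by norm_num)]; exact Icc_subset_Icc ha hb)
  have hshift (k : ℝ) (hk0 : 0 ≤ k) (hk : k ≤ 2) :
      IntervalIntegrable (fun y => F (y + k)) MeasureTheory.volume 0 1 :=
    (IntervalIntegrable.comp_add_right_iff (f := F) (a := 0) (b := 1) (c := k)).2
      (hF' (by linarith) (by linarith) (by linarith))
  have h0 := hF' le_rfl (by norm_num) zero_le_one
  have h1 := hshift 1 zero_le_one (by norm_num)
  have h2 := hshift 2 zero_le_two le_rfl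
  rw [integral_add (h0.add h1) h2, integral_add h0 h1, integral_comp_add_right,
    integral_comp_add_right]
  norm_num
  rw [integral_add_adjacent_intervals h0 (hF' zero_le_one (by norm_num) one_le_two),
    integral_add_adjacent_intervals (hF' le_rfl (by norm_num) zero_le_two)
      (hF' zero_le_two le_rfl (by norm_num))]

lemma integral_mul_secondDiff_le {h ρ : ℝ → ℝ} (hh : ContinuousOn h (Icc 0 3))
    (hconv : ConvexOn ℝ (Icc 0 3) h) (hρ : Continuous ρ)
    (hρ1 : ∀ t, ρ t ≤ 1) (hρsupp : ∀ t ∉ Ioo 0 1, ρ t = 0) :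
    ∫ x in (0:ℝ)..3, h x * (ρ x - 2 * ρ (x - 1) + ρ (x - 2)) ≤
      (∫ x in (0:ℝ)..1, h x) - 2 * (∫ x in (1:ℝ)..2, h x) + ∫ x in (2:ℝ)..3, h x := by
  have hshift (k : ℝ) (hk0 : 0 ≤ k) (hk : k ≤ 2) :
      ContinuousOn (fun y => h (y + k)) (Icc 0 1) :=
    hh.comp (continuousOn_id.add continuousOn_const) fun y hy =>
      ⟨by linarith [hy.1], by linarith [hy.2]⟩
  have h0 : ContinuousOn h (Icc 0 1) := hh.mono (Icc_subset_Icc le_rfl (by norm_num))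
  have h1 := hshift 1 zero_le_one (by norm_num)
  have h2 := hshift 2 zero_le_two le_rfl
  have hΔ_cont : ContinuousOn (fun y => h y - 2 * h (y + 1) + h (y + 2)) (Icc 0 1) :=
    (h0.fun_sub (continuousOn_const.fun_mul h1)).fun_add h2
  have hg : Continuous fun x => ρ x - 2 * ρ (x - 1) + ρ (x - 2) := by fun_prop
  have hρ' {t : ℝ} (ht : t ≤ 0 ∨ 1 ≤ t) : ρ t = 0 :=
    hρsupp t fun h => by rcases ht with ht | ht <;> linarith [h.1, h.2]
  calc _ = ∫ y in (0:ℝ)..1, (h y * (ρ y - 2 * ρ (y - 1) + ρ (y - 2))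
        + h (y + 1) * (ρ (y + 1) - 2 * ρ (y + 1 - 1) + ρ (y + 1 - 2))
        + h (y + 2) * (ρ (y + 2) - 2 * ρ (y + 2 - 1) + ρ (y + 2 - 2))) :=
        integral_zero_three_eq_integral_zero_one
          ((hh.mul hg.continuousOn).intervalIntegrable_of_Icc (by norm_num))
    _ ≤ ∫ y in (0:ℝ)..1, (h y - 2 * h (y + 1) + h (y + 2)) := by
      refine integral_mono_on zero_le_one ?_ (hΔ_cont.intervalIntegrable_of_Icc zero_le_one)
        fun y hy => ?_
      · exact (((h0.mul hg.continuousOn).add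
          (h1.mul (hg.comp (continuous_add_const 1)).continuousOn)).add
          (h2.mul (hg.comp (continuous_add_const 2)).continuousOn)).intervalIntegrable_of_Icc
          zero_le_one
      have hΔ := hconv.two_mul_le_add (x := y) (d := 1) ⟨hy.1, by linarith [hy.2]⟩
        ⟨by linarith [hy.1], by linarith [hy.2]⟩
      rw [mul_one] at hΔ
      rw [show y + 1 - 1 = y by ring, show y + 1 - 2 = y - 1 by ring,
        show y + 2 - 1 = y + 1 by ring, show y + 2 - 2 = y by ring,
        hρ' (Or.inl (by linarith [hy.2] : y - 1 ≤ 0)),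
        hρ' (Or.inl (by linarith [hy.2] : y - 2 ≤ 0)),
        hρ' (Or.inr (by linarith [hy.1] : 1 ≤ y + 1)),
        hρ' (Or.inr (by linarith [hy.1] : 1 ≤ y + 2))]
      nlinarith [mul_nonneg (sub_nonneg.2 (hρ1 y))
        (by linarith : 0 ≤ h y - 2 * h (y + 1) + h (y + 2))]
    _ = _ := by
      rw [integral_add ((h0.fun_sub (continuousOn_const.fun_mul h1)).intervalIntegrable_of_Icc
          zero_le_one) (h2.intervalIntegrable_of_Icc zero_le_one),
        integral_sub (h0.intervalIntegrable_of_Icc zero_le_one)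
          ((continuousOn_const.fun_mul h1).intervalIntegrable_of_Icc zero_le_one),
        intervalIntegral.integral_const_mul, integral_comp_add_right, integral_comp_add_right]
      norm_num

def IsDistribSubsolution (c : ℝ) (h : ℝ → ℝ) : Prop :=
  ∀ φ : ℝ → ℝ, ContDiff ℝ 2 φ → (∀ x, 0 ≤ φ x) → tsupport φ ⊆ Ioo 0 3 →
    c * ∫ x in (0:ℝ)..3, h x * φ x ≤ ∫ x in (0:ℝ)..3, h x * deriv (deriv φ) x

lemma IsDistribSubsolution.mul_integral_le_secondDiff {c : ℝ} {h : ℝ → ℝ}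
    (hsub : IsDistribSubsolution c h) (hc : 0 ≤ c) (hh : ContinuousOn h (Icc 0 3))
    (hconv : ConvexOn ℝ (Icc 0 3) h) (hpos : ∀ x ∈ Icc (0:ℝ) 3, 0 ≤ h x) :
    c / 8 * ∫ x in (1:ℝ)..2, h x ≤
      (∫ x in (0:ℝ)..1, h x) - 2 * (∫ x in (1:ℝ)..2, h x) + ∫ x in (2:ℝ)..3, h x := by
  have hhφ : ContinuousOn (fun x => h x * tentConvBump x) (Icc 0 3) :=
    hh.mul contDiff_tentConvBump.continuous.continuousOn
  have hmiddle : 1 / 8 * ∫ x in (1:ℝ)..2, h x ≤ ∫ x in (1:ℝ)..2, h x * tentConvBump x := by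
    have hIcc : Icc (1:ℝ) 2 ⊆ Icc 0 3 := Icc_subset_Icc zero_le_one (by norm_num)
    rw [← intervalIntegral.integral_const_mul]
    refine integral_mono_on one_le_two ?_ ?_ fun x hx => ?_
    · exact (continuousOn_const.fun_mul (hh.mono hIcc)).intervalIntegrable_of_Icc one_le_two
    · exact (hhφ.mono hIcc).intervalIntegrable_of_Icc one_le_two
    nlinarith [one_div_eight_le_tentConvBump hx, hpos x (hIcc hx)]
  have hwhole : ∫ x in (1:ℝ)..2, h x * tentConvBump x ≤ ∫ x in (0:ℝ)..3, h x * tentConvBump x :=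
    integral_mono_interval zero_le_one one_le_two (by norm_num : (2:ℝ) ≤ 3)
      ((MeasureTheory.ae_restrict_iff' measurableSet_Ioc).2 (Filter.Eventually.of_forall
        fun x hx => mul_nonneg (hpos x (Ioc_subset_Icc_self hx)) (tentConvBump_nonneg x)))
      (hhφ.intervalIntegrable_of_Icc (by norm_num))
  calc c / 8 * ∫ x in (1:ℝ)..2, h x ≤ c * ∫ x in (0:ℝ)..3, h x * tentConvBump x := by
        rw [div_eq_mul_one_div, mul_assoc]
        exact mul_le_mul_of_nonneg_left (hmiddle.trans hwhole) hc
    _ ≤ ∫ x in (0:ℝ)..3, h x * deriv (deriv tentConvBump) x :=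
        hsub _ contDiff_tentConvBump tentConvBump_nonneg tsupport_tentConvBump_subset
    _ = ∫ x in (0:ℝ)..3, h x * (unitBump x - 2 * unitBump (x - 1) + unitBump (x - 2)) := by
        simp only [tentConvBump,
          deriv_deriv_movingIntegral_movingIntegral unitBump.continuous]
    _ ≤ _ := integral_mul_secondDiff_le hh hconv unitBump.continuous (fun _ => unitBump.le_one)
        fun t ht => unitBump_eq_zero fun h => ht ⟨by linarith [h.1], by linarith [h.2]⟩

lemma one_add_mul_le_of_gain {κ η A B C : ℝ} (hA : 0 ≤ A) (hgain : κ * B ≤ A - 2 * B + C)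
    (hη0 : 0 ≤ η) (hη : η ≤ 1 / 2) (hηκ : 3 * η ≤ κ) (hAB : (1 - η) * A ≤ B) :
    (1 + η) * B ≤ C := by
  have hA2 : A ≤ 2 * B := by nlinarith
  nlinarith [mul_le_mul_of_nonneg_left hA2 hη0]

/-- The three-annuli property for convex distributional subsolutions of
`h'' ≥ ĉ h` on `[0,3]`: there is `η > 0` such that if `∫₁² h ≥ (1-η)∫₀¹ h`,
then `∫₂³ h ≥ (1+η)∫₁² h`. -/
theorem stmt11 (chat : ℝ) (hchat : 0 < chat) :
    ∃ η : ℝ, 0 < η ∧ ∀ h : ℝ → ℝ,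
      ContinuousOn h (Icc 0 3) →
      ConvexOn ℝ (Icc 0 3) h →
      (∀ x ∈ Icc (0:ℝ) 3, 0 ≤ h x) →
      (∀ φ : ℝ → ℝ, ContDiff ℝ 2 φ → (∀ x, 0 ≤ φ x) → tsupport φ ⊆ Ioo 0 3 →
        chat * ∫ x in (0:ℝ)..3, h x * φ x ≤ ∫ x in (0:ℝ)..3, h x * deriv (deriv φ) x) →
      ((1 - η) * ∫ x in (0:ℝ)..1, h x) ≤ (∫ x in (1:ℝ)..2, h x) →
      ((1 + η) * ∫ x in (1:ℝ)..2, h x) ≤ ∫ x in (2:ℝ)..3, h x := by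
  refine ⟨min (1 / 2) (chat / 24), lt_min (by norm_num) (by positivity),
    fun h hh hconv hpos hsub hAB => ?_⟩
  have hgain := IsDistribSubsolution.mul_integral_le_secondDiff hsub hchat.le hh hconv hpos
  have hA : 0 ≤ ∫ x in (0:ℝ)..1, h x :=
    integral_nonneg zero_le_one fun x hx => hpos x ⟨hx.1, by linarith [hx.2]⟩
  exact one_add_mul_le_of_gain hA hgain (le_min (by norm_num) (by positivity))
    (min_le_left _ _) (by linarith [min_le_right (1 / 2 : ℝ) (chat / 24)]) hAB
end

section
/- The integrals I := (1/2)∫₀^{2π} (φ-π)(sin 2φ + sin φ) dφ and II := ∫₀^{2π} (sin²(φ/2) cos φ + sin(φ/2) cos(φ/2) sin φ) dφ satisfy I = -3π/2 and II = 0; in particular I + II ≠ 0. -/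
/-!
Both integrals are evaluated by explicit antiderivatives. For an integer `n ≠ 0`,
integration by parts gives `∫₀^{2π} (φ - π) sin (n φ) dφ = -2π / n`, so `2 I = -π - 2π`.
The integrand of `II` is the derivative of `sin² (φ/2) sin φ`, which vanishes at `0` and `2π`.
-/

open Real intervalIntegral

theorem hasDerivAt_sub_pi_mul_sin_int_mul {n : ℤ} (hn : n ≠ 0) (x : ℝ) :
    HasDerivAt (fun φ : ℝ => -(φ - π) * cos (n * φ) / n + sin (n * φ) / n ^ 2)
      ((x - π) * sin (n * x)) x := by
  have hlin : HasDerivAt (fun φ : ℝ => (n : ℝ) * φ) n x := by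
    simpa using (hasDerivAt_id x).const_mul (n : ℝ)
  refine (((((hasDerivAt_id x).sub_const π).neg.mul hlin.cos).div_const (n : ℝ)).add
    (hlin.sin.div_const ((n : ℝ) ^ 2))).congr_deriv ?_
  have hn' : (n : ℝ) ≠ 0 := Int.cast_ne_zero.mpr hn
  simp only [Pi.neg_apply, id]
  field_simp
  ring

theorem integral_sub_pi_mul_sin_int_mul {n : ℤ} (hn : n ≠ 0) :
    ∫ φ in (0 : ℝ)..(2 * π), (φ - π) * sin (n * φ) = -2 * π / n := by
  rw [integral_eq_sub_of_hasDerivAt (fun x _ => hasDerivAt_sub_pi_mul_sin_int_mul hn x)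
    (by apply Continuous.intervalIntegrable; fun_prop)]
  have hsin : sin (n * (2 * π)) = 0 := by
    rw [← mul_assoc]
    exact_mod_cast sin_int_mul_pi (n * 2)
  simp only [cos_int_mul_two_pi, hsin, mul_zero, cos_zero, sin_zero]
  ring

theorem hasDerivAt_sin_half_sq_mul_sin (x : ℝ) :
    HasDerivAt (fun φ : ℝ => sin (φ / 2) ^ 2 * sin φ)
      (sin (x / 2) ^ 2 * cos x + sin (x / 2) * cos (x / 2) * sin x) x := by
  refine ((((hasDerivAt_id x).div_const 2).sin.pow 2).mul (hasDerivAt_sin x)).congr_deriv ?_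
  simp only [id, Pi.pow_apply]
  ring

/-- The integrals `I = (1/2)∫₀^{2π} (φ-π)(sin 2φ + sin φ) dφ` and
`II = ∫₀^{2π} (sin²(φ/2) cos φ + sin(φ/2) cos(φ/2) sin φ) dφ` satisfy
`I = -3π/2`, `II = 0`, and in particular `I + II ≠ 0`. -/
theorem stmt13 :
    let I : ℝ := (1 / 2) * ∫ φ in (0:ℝ)..(2 * π),
      (φ - π) * (Real.sin (2 * φ) + Real.sin φ)
    let II : ℝ := ∫ φ in (0:ℝ)..(2 * π),
      (Real.sin (φ / 2) ^ 2 * Real.cos φ +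
        Real.sin (φ / 2) * Real.cos (φ / 2) * Real.sin φ)
    I = -3 * π / 2 ∧ II = 0 ∧ I + II ≠ 0 := by
  intro I II
  have hI : I = -3 * π / 2 := by
    have h2 := integral_sub_pi_mul_sin_int_mul (n := 2) two_ne_zero
    have h1 := integral_sub_pi_mul_sin_int_mul (n := 1) one_ne_zero
    simp only [Int.cast_ofNat, Int.cast_one, one_mul, div_one] at h1 h2
    simp only [I, mul_add]
    rw [integral_add (by apply Continuous.intervalIntegrable; fun_prop)
      (by apply Continuous.intervalIntegrable; fun_prop), h1, h2]
    ring
  have hII : II = 0 := by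
    simp [II, integral_eq_sub_of_hasDerivAt (fun x _ => hasDerivAt_sin_half_sq_mul_sin x)
      (by apply Continuous.intervalIntegrable; fun_prop)]
  refine ⟨hI, hII, ?_⟩
  rw [hI, hII, add_zero]
  exact div_ne_zero (mul_ne_zero (by norm_num) pi_ne_zero) two_ne_zero
end
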